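/- Define vN : ℕ → ℕ by vN 0 = 0 and vN (n+1) = vN n + 2^(vN n). Then for every n : ℕ the set of ∈_Ack-elements of vN n is finite of cardinality exactly n, i.e. the number of k : ℕ with k ∈_Ack vN n equals n. -/

import Mathlib

/-- `vN n` is the Ackermann code of the `n`-th von Neumann ordinal. -/
def vN : ℕ → ℕ
  | 0 => 0
  | n + 1 => vN n + 2 ^ vN n

lemma testBit_add_two_pow (m p k : ℕ) (h : m < 2 ^ p) :
    Nat.testBit (m + 2 ^ p) k = (Nat.testBit m k || decide (k = p)) := by
  rcases lt_trichotomy k p with hk | rfl | hk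
  · have h2 : (2:ℕ) ^ p = 2 ^ (p - k) * 2 ^ k := by
      rw [← pow_add]; congr 1; omega
    have hdvd : (2:ℕ)^k ∣ 2^p := ⟨2^(p-k), by rw [h2]; ring⟩
    simp only [Nat.testBit, Nat.shiftRight_eq_div_pow, Nat.one_and_eq_mod_two]
    have : (m + 2 ^ p) / 2 ^ k = m / 2 ^ k + 2 ^ (p - k) := by
      rw [Nat.add_div_of_dvd_left hdvd, h2, Nat.mul_div_cancel _ (Nat.two_pow_pos k)]
    rw [this]
    have heven : (2:ℕ) ^ (p - k) % 2 = 0 := by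
      have : p - k ≠ 0 := by omega
      cases' Nat.exists_eq_succ_of_ne_zero this with q hq
      simp [hq, pow_succ, Nat.mul_mod]
    rw [Nat.add_mod, heven]
    simp [hk.ne]
  · have h1 : Nat.testBit m k = false := Nat.testBit_eq_false_of_lt h
    simp only [Nat.testBit, Nat.shiftRight_eq_div_pow, Nat.one_and_eq_mod_two] at h1 ⊢
    have : (m + 2 ^ k) / 2 ^ k = m / 2 ^ k + 1 := by
      rw [Nat.add_div_of_dvd_left dvd_rfl, Nat.div_self (by positivity)]
    rw [this]
    simp [this, Nat.div_eq_of_lt h]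
  · have hlt : m + 2 ^ p < 2 ^ k := by
      calc m + 2^p < 2^p + 2^p := by omega
      _ = 2^(p+1) := by ring
      _ ≤ 2^k := Nat.pow_le_pow_right (by norm_num) (by omega)
    rw [Nat.testBit_eq_false_of_lt hlt, Nat.testBit_eq_false_of_lt (lt_of_le_of_lt (Nat.le_add_right _ _) hlt)]
    simp [hk.ne']

theorem vN_card_mem_ack :
    ∀ n : ℕ, {k : ℕ | Nat.testBit (vN n) k = true}.Finite ∧
      {k : ℕ | Nat.testBit (vN n) k = true}.ncard = n := by
  intro n
  induction n with
  | zero => simp [vN]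
  | succ n ih =>
    obtain ⟨hfin, hcard⟩ := ih
    have hlt : vN n < 2 ^ vN n := Nat.lt_two_pow_self
    have hset : {k : ℕ | Nat.testBit (vN (n+1)) k = true}
        = insert (vN n) {k : ℕ | Nat.testBit (vN n) k = true} := by
      ext k
      simp only [Set.mem_setOf_eq, Set.mem_insert_iff, vN,
        testBit_add_two_pow (vN n) (vN n) k hlt, Bool.or_eq_true, decide_eq_true_eq]
      tauto
    have hnotmem : vN n ∉ {k : ℕ | Nat.testBit (vN n) k = true} := by
      simp [Nat.testBit_eq_false_of_lt hlt]
    rw [hset]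
    exact ⟨hfin.insert _, by rw [Set.ncard_insert_of_notMem hnotmem hfin, hcard]⟩
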